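/- arXiv:1810.01699 — 4 statements merged into one kernel-verified Lean document; each statement's English description precedes it below -/
import Mathlib

section
/- (Corollary 2.2, Cayley trees and dynamics) Let d ≥ 2 be an integer, let ξ ∈ ℂ with |ξ| = 1, and let b ∈ ℝ with b ≠ −1. Define sequences (A_k)_{k≥0}, (B_k)_{k≥0} in ℂ by A_0 = ξ, B_0 = 1, A_{k+1} = ξ·(A_k + b·B_k)^d and B_{k+1} = (b·A_k + B_k)^d, so that A_k and B_k are the partition functions of the rooted Cayley tree T_{k,d} conditioned on the root being occupied resp. unoccupied, and A_k + B_k = Z_{T_{k,d}}(ξ,b). Then the orbit of 1 under f_{ξ,b} avoids −1 (i.e. f_{ξ,b}^{∘k}(1) ≠ −1 for all k ≥ 0) if and only if A_k + B_k ≠ 0 for all k ≥ 0. -/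
/-!
Writing `R_k = A_k / B_k`, the recursion for `(A_k, B_k)` is exactly `R_{k+1} = f_{ξ,b}(R_k)`
with `R_0 = ξ = f_{ξ,b}(1)`, as long as no denominator `b A_k + B_k` vanishes; and then
`f^[k+1](1) = -1` iff `A_k + B_k = 0`. Since `|ξ| = 1` and `b` is real, the identity
`|A + bB|² - |bA + B|² = (1 - b²)(|A|² - |B|²)` propagates `|A_k| = |B_k|`, so a vanishing
denominator forces `|b| = 1`, i.e. `b = 1`, and then it equals `A_k + B_k` itself.
-/

/-- The rational map `f_{ξ,b}(R) = ξ·((R+b)/(bR+1))^d` associated to the Ising model. -/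
noncomputable def fIsing (d : ℕ) (ξ b R : ℂ) : ℂ := ξ * ((R + b) / (b * R + 1)) ^ d

lemma Complex.normSq_add_ofReal_mul_sub_normSq_ofReal_mul_add (b : ℝ) (A B : ℂ) :
    normSq (A + b * B) - normSq (b * A + B) = (1 - b ^ 2) * (normSq A - normSq B) := by
  simp only [normSq_apply, add_re, add_im, mul_re, mul_im, ofReal_re, ofReal_im]
  ring

lemma Complex.norm_add_ofReal_mul_eq_of_norm_eq (b : ℝ) {A B : ℂ} (h : ‖A‖ = ‖B‖) :
    ‖A + b * B‖ = ‖b * A + B‖ := by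
  have hsq : normSq A = normSq B := by rw [← Complex.sq_norm, ← Complex.sq_norm, h]
  have := normSq_add_ofReal_mul_sub_normSq_ofReal_mul_add b A B
  rw [norm_def, norm_def, sub_eq_iff_eq_add.mp this, hsq, sub_self, mul_zero, zero_add]

lemma Complex.add_eq_zero_of_ofReal_mul_add_eq_zero {b : ℝ} (hb : b ≠ -1) {A B : ℂ}
    (hAB : ‖A‖ = ‖B‖) (hB : B ≠ 0) (h : b * A + B = 0) : A + B = 0 := by
  have hnorm : |b| * ‖B‖ = ‖B‖ := by
    rw [← hAB, ← Real.norm_eq_abs, ← norm_real, ← norm_mul, eq_neg_of_add_eq_zero_left h,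
      norm_neg, hAB]
  have hb1 : b = 1 := ((abs_eq zero_le_one).mp
    ((mul_eq_right₀ (norm_ne_zero_iff.mpr hB)).mp hnorm)).resolve_right hb
  simpa [hb1] using h

lemma fIsing_one (d : ℕ) (ξ : ℂ) {b : ℂ} (hb : b + 1 ≠ 0) : fIsing d ξ b 1 = ξ := by
  rw [fIsing, mul_one, add_comm, div_self hb, one_pow, mul_one]

lemma fIsing_div (d : ℕ) (ξ : ℂ) {b A B : ℂ} (hB : B ≠ 0) :
    fIsing d ξ b (A / B) = ξ * (A + b * B) ^ d / (b * A + B) ^ d := by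
  have hquot : (A / B + b) / (b * (A / B) + 1) = (A + b * B) / (b * A + B) := by
    field_simp
  rw [fIsing, hquot, div_pow, mul_div_assoc]

section IsingRecursion

variable {d : ℕ} {ξ : ℂ} {b : ℝ} {A B : ℕ → ℂ}

lemma norm_eq_norm_of_isingRecursion (hξ : ‖ξ‖ = 1) (hA0 : A 0 = ξ) (hB0 : B 0 = 1)
    (hA : ∀ k, A (k + 1) = ξ * (A k + (b : ℂ) * B k) ^ d)
    (hB : ∀ k, B (k + 1) = ((b : ℂ) * A k + B k) ^ d) (k : ℕ) : ‖A k‖ = ‖B k‖ := by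
  induction k with
  | zero => simp [hA0, hB0, hξ]
  | succ k ih =>
    rw [hA, hB, norm_mul, norm_pow, norm_pow, hξ, one_mul,
      Complex.norm_add_ofReal_mul_eq_of_norm_eq b ih]

lemma iterate_fIsing_one_eq_div (hξ : ‖ξ‖ = 1) (hb : b ≠ -1) (hA0 : A 0 = ξ) (hB0 : B 0 = 1)
    (hA : ∀ k, A (k + 1) = ξ * (A k + (b : ℂ) * B k) ^ d)
    (hB : ∀ k, B (k + 1) = ((b : ℂ) * A k + B k) ^ d) (k : ℕ)
    (hAB : ∀ j < k, A j + B j ≠ 0) :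
    B k ≠ 0 ∧ (fIsing d ξ b)^[k + 1] 1 = A k / B k := by
  induction k with
  | zero =>
    have hb' : (b : ℂ) + 1 ≠ 0 := by exact_mod_cast (add_eq_zero_iff_eq_neg.not.mpr hb)
    simp [hA0, hB0, fIsing_one d ξ hb']
  | succ k ih =>
    obtain ⟨hBk, hk⟩ := ih fun j hj => hAB j (by omega)
    have hden : (b : ℂ) * A k + B k ≠ 0 := fun h => hAB k (by omega) <|
      Complex.add_eq_zero_of_ofReal_mul_add_eq_zero hb
        (norm_eq_norm_of_isingRecursion hξ hA0 hB0 hA hB k) hBk h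
    refine ⟨hB k ▸ pow_ne_zero d hden, ?_⟩
    rw [Function.iterate_succ_apply', hk, fIsing_div d ξ hBk, hA, hB]

end IsingRecursion

theorem cayley_tree_dynamics_general (d : ℕ) (ξ : ℂ) (hξ : ‖ξ‖ = 1)
    (b : ℝ) (hb : b ≠ -1) (A B : ℕ → ℂ)
    (hA0 : A 0 = ξ) (hB0 : B 0 = 1)
    (hA : ∀ k, A (k + 1) = ξ * (A k + (b : ℂ) * B k) ^ d)
    (hB : ∀ k, B (k + 1) = ((b : ℂ) * A k + B k) ^ d) :
    (∀ k : ℕ, (fIsing d ξ (b : ℂ))^[k] 1 ≠ -1) ↔ (∀ k : ℕ, A k + B k ≠ 0) := by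
  have orbit := iterate_fIsing_one_eq_div hξ hb hA0 hB0 hA hB
  have div_eq_neg_one {k : ℕ} (hBk : B k ≠ 0) : A k / B k = -1 ↔ A k + B k = 0 := by
    rw [div_eq_iff hBk, neg_one_mul, eq_neg_iff_add_eq_zero]
  constructor
  · intro horb k
    induction k using Nat.strong_induction_on with
    | _ k ih =>
      obtain ⟨hBk, hk⟩ := orbit k ih
      exact (div_eq_neg_one hBk).not.mp (hk ▸ horb (k + 1))
  · rintro hAB (_ | k)
    · norm_num
    · obtain ⟨hBk, hk⟩ := orbit k fun j _ => hAB j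
      exact hk ▸ (div_eq_neg_one hBk).not.mpr (hAB k)

/-- Corollary 2.2: the orbit of 1 under `f_{ξ,b}` avoids -1 if and only if the Ising
partition functions `A_k + B_k` of the rooted Cayley trees `T_{k,d}` are all nonzero. -/
theorem cayley_tree_dynamics (d : ℕ) (hd : 2 ≤ d) (ξ : ℂ) (hξ : ‖ξ‖ = 1)
    (b : ℝ) (hb : b ≠ -1) (A B : ℕ → ℂ)
    (hA0 : A 0 = ξ) (hB0 : B 0 = 1)
    (hA : ∀ k, A (k + 1) = ξ * (A k + (b : ℂ) * B k) ^ d)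
    (hB : ∀ k, B (k + 1) = ((b : ℂ) * A k + B k) ^ d) :
    (∀ k : ℕ, (fIsing d ξ (b : ℂ))^[k] 1 ≠ -1) ↔ (∀ k : ℕ, A k + B k ≠ 0) :=
  cayley_tree_dynamics_general d ξ hξ b hb A B hA0 hB0 hA hB
end

section
/- (Lemma 3.5, expansion trichotomy on the circle) Let d ≥ 2 be an integer, let ξ ∈ ℂ with |ξ| = 1, and let b > 0 with b ≠ 1; set b_c = (d−1)/(d+1). Then: (i) if 0 < b < b_c or b > 1/b_c, there is a constant κ > 1 (independent of ξ) with |f'_{ξ,b}(R)| ≥ κ for all R ∈ ∂𝔻; (ii) if b = b_c or b = 1/b_c, then |f'_{ξ,b}(R)| ≥ 1 for all R ∈ ∂𝔻, with equality exactly at R = 1, where |f'_{ξ,b}(1)| = 1; (iii) if b_c < b < 1/b_c, then |f'_{ξ,b}(1)| = d·|1−b|/(1+b) < 1. In all cases |f'_{ξ,b}(R)| for R ∈ ∂𝔻 does not depend on ξ and is strictly increasing as a function of |Arg(R)|. -/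
open Complex Set

/-- `|f'_{ξ,b}(R)|` for `|ξ| = |R| = 1`, as a function of `t = Re R`. -/
noncomputable def circleExpansion (d : ℕ) (b t : ℝ) : ℝ :=
  d * |1 - b ^ 2| / (1 + b ^ 2 + 2 * b * t)

noncomputable def minExpansion (d : ℕ) (b : ℝ) : ℝ :=
  d * |1 - b| / (1 + b)

section Thresholds

variable {d : ℕ} {b : ℝ}

lemma one_lt_minExpansion (hd : 2 ≤ d) (hb : 0 < b)
    (h : b < ((d : ℝ) - 1) / ((d : ℝ) + 1) ∨ ((d : ℝ) + 1) / ((d : ℝ) - 1) < b) :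
    1 < minExpansion d b := by
  have hd' : (2 : ℝ) ≤ d := by exact_mod_cast hd
  rw [minExpansion, one_lt_div (by linarith)]
  rcases h with h | h
  · rw [lt_div_iff₀ (by linarith)] at h
    rw [abs_of_pos (by nlinarith)]
    nlinarith
  · rw [div_lt_iff₀ (by linarith)] at h
    rw [abs_of_neg (by nlinarith)]
    nlinarith

lemma minExpansion_eq_one (hd : 2 ≤ d)
    (h : b = ((d : ℝ) - 1) / ((d : ℝ) + 1) ∨ b = ((d : ℝ) + 1) / ((d : ℝ) - 1)) :
    minExpansion d b = 1 := by
  have hd' : (2 : ℝ) ≤ d := by exact_mod_cast hd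
  have hd₁ : (0 : ℝ) < d - 1 := by linarith
  have hd₂ : (0 : ℝ) < d + 1 := by linarith
  rcases h with rfl | rfl
  · rw [minExpansion, abs_of_pos (by rw [sub_pos, div_lt_one hd₂]; linarith),
      div_eq_one_iff_eq (by positivity)]
    field_simp
    ring
  · rw [minExpansion, abs_of_neg (by rw [sub_neg, one_lt_div hd₁]; linarith),
      div_eq_one_iff_eq (by positivity)]
    field_simp
    ring

lemma minExpansion_lt_one (hd : 2 ≤ d)
    (h : ((d : ℝ) - 1) / ((d : ℝ) + 1) < b ∧ b < ((d : ℝ) + 1) / ((d : ℝ) - 1)) :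
    minExpansion d b < 1 := by
  have hd' : (2 : ℝ) ≤ d := by exact_mod_cast hd
  obtain ⟨h₁, h₂⟩ := h
  rw [div_lt_iff₀ (by linarith)] at h₁
  rw [lt_div_iff₀ (by linarith)] at h₂
  rw [minExpansion, div_lt_one (by nlinarith)]
  rcases le_total b 1 with hb | hb
  · rw [abs_of_nonneg (by linarith)]
    nlinarith
  · rw [abs_of_nonpos (by linarith)]
    nlinarith

end Thresholds

section Monotonicity

variable {d : ℕ} {b : ℝ}

lemma circleExpansion_one (hb : 0 < 1 + b) : circleExpansion d b 1 = minExpansion d b := by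
  rw [circleExpansion, minExpansion, show 1 - b ^ 2 = (1 - b) * (1 + b) by ring, abs_mul,
    abs_of_pos hb, show 1 + b ^ 2 + 2 * b * 1 = (1 + b) * (1 + b) by ring,
    ← mul_assoc, mul_div_mul_right _ _ hb.ne']

lemma circleExpansion_strictAntiOn (hd : d ≠ 0) (hb₀ : 0 < b) (hb₁ : b ≠ 1) :
    StrictAntiOn (circleExpansion d b) (Ici (-1)) := by
  have hden : ∀ t ∈ Ici (-1 : ℝ), 0 < 1 + b ^ 2 + 2 * b * t := fun t (ht : -1 ≤ t) => by
    nlinarith [sq_pos_of_ne_zero (sub_ne_zero.2 hb₁)]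
  have hnum : 0 < (d : ℝ) * |1 - b ^ 2| :=
    mul_pos (by positivity) (abs_pos.2 fun h => hb₁ (by nlinarith))
  intro s hs t ht hst
  exact div_lt_div_of_pos_left hnum (hden s hs) (by nlinarith)

lemma minExpansion_le_circleExpansion (hd : d ≠ 0) (hb₀ : 0 < b) (hb₁ : b ≠ 1) {t : ℝ}
    (ht : t ∈ Icc (-1) 1) : minExpansion d b ≤ circleExpansion d b t := by
  rw [← circleExpansion_one (by linarith)]
  exact (circleExpansion_strictAntiOn hd hb₀ hb₁).antitoneOn ht.1 (by norm_num) ht.2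

lemma circleExpansion_eq_minExpansion_iff (hd : d ≠ 0) (hb₀ : 0 < b) (hb₁ : b ≠ 1) {t : ℝ}
    (ht : -1 ≤ t) : circleExpansion d b t = minExpansion d b ↔ t = 1 := by
  rw [← circleExpansion_one (by linarith)]
  exact (circleExpansion_strictAntiOn hd hb₀ hb₁).injOn.eq_iff ht (by norm_num)

end Monotonicity

section UnitCircle

variable {b : ℝ} {R : ℂ}

lemma norm_ofReal_mul_add_one_sq (hR : ‖R‖ = 1) :
    ‖(b : ℂ) * R + 1‖ ^ 2 = 1 + b ^ 2 + 2 * b * R.re := by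
  have hre : R.re * R.re + R.im * R.im = 1 := by
    rw [← normSq_apply, ← Complex.sq_norm, hR, one_pow]
  rw [Complex.sq_norm, normSq_apply]
  simp only [add_re, add_im, mul_re, mul_im, ofReal_re, ofReal_im, one_re, one_im]
  linear_combination b ^ 2 * hre

lemma norm_add_ofReal_eq (hR : ‖R‖ = 1) : ‖R + b‖ = ‖(b : ℂ) * R + 1‖ := by
  have hre : R.re * R.re + R.im * R.im = 1 := by
    rw [← normSq_apply, ← Complex.sq_norm, hR, one_pow]
  refine (sq_eq_sq₀ (norm_nonneg _) (norm_nonneg _)).1 ?_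
  rw [norm_ofReal_mul_add_one_sq hR, Complex.sq_norm, normSq_apply]
  simp only [add_re, add_im, ofReal_re, ofReal_im]
  linear_combination hre

lemma ofReal_mul_add_one_ne_zero (hb : |b| ≠ 1) (hR : ‖R‖ = 1) : (b : ℂ) * R + 1 ≠ 0 := by
  intro h
  have := congrArg norm (eq_neg_of_add_eq_zero_left h)
  rw [norm_mul, norm_real, hR, mul_one, norm_neg, norm_one] at this
  exact hb this

lemma Complex.re_eq_one_iff_of_norm_eq_one (hR : ‖R‖ = 1) : R.re = 1 ↔ R = 1 := by
  refine ⟨fun h => ext h ?_, fun h => h ▸ one_re⟩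
  rw [one_im, ← abs_re_eq_norm, h, hR, abs_one]

lemma Complex.re_lt_re_of_abs_arg_lt {S : ℂ} (hS : S ≠ 0) (hRS : ‖R‖ = ‖S‖)
    (h : |arg R| < |arg S|) : S.re < R.re := by
  have hR : R ≠ 0 := norm_ne_zero_iff.1 (hRS ▸ norm_ne_zero_iff.2 hS)
  have hcos := Real.cos_lt_cos_of_nonneg_of_le_pi (abs_nonneg _) (abs_arg_le_pi S) h
  rw [Real.cos_abs, Real.cos_abs, cos_arg hR, cos_arg hS, hRS] at hcos
  exact (div_lt_div_iff_of_pos_right (norm_pos_iff.2 hS)).1 hcos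

end UnitCircle

lemma hasDerivAt_fIsing (d : ℕ) (ξ : ℂ) {b R : ℂ} (h : b * R + 1 ≠ 0) :
    HasDerivAt (fIsing d ξ b)
      (ξ * (d * ((R + b) / (b * R + 1)) ^ (d - 1) * ((1 - b ^ 2) / (b * R + 1) ^ 2))) R := by
  have hmob : HasDerivAt (fun z => (z + b) / (b * z + 1)) ((1 - b ^ 2) / (b * R + 1) ^ 2) R :=
    (((hasDerivAt_id' R).add_const b).div
      (((hasDerivAt_id' R).const_mul b).add_const 1) h).congr_deriv (by ring)
  exact (hmob.pow d).const_mul ξ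

lemma norm_deriv_fIsing (d : ℕ) (ξ : ℂ) {b : ℝ} {R : ℂ} (hR : ‖R‖ = 1)
    (h : (b : ℂ) * R + 1 ≠ 0) :
    ‖deriv (fIsing d ξ b) R‖ = ‖ξ‖ * circleExpansion d b R.re := by
  have hnum : ‖1 - (b : ℂ) ^ 2‖ = |1 - b ^ 2| := by
    rw [← ofReal_pow, ← ofReal_one, ← ofReal_sub, norm_real, Real.norm_eq_abs]
  rw [(hasDerivAt_fIsing d ξ h).deriv, circleExpansion, ← norm_ofReal_mul_add_one_sq hR]
  simp only [norm_mul, norm_pow, norm_div, norm_add_ofReal_eq hR,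
    div_self (norm_ne_zero_iff.2 h), one_pow, mul_one, norm_natCast, hnum]
  ring

/-- Lemma 3.5: expansion trichotomy of `|f'_{ξ,b}|` on the unit circle, with
`b_c = (d-1)/(d+1)` and `1/b_c = (d+1)/(d-1)`. -/
theorem fIsing_expansion_trichotomy (d : ℕ) (hd : 2 ≤ d) (ξ : ℂ) (hξ : ‖ξ‖ = 1)
    (b : ℝ) (hb₀ : 0 < b) (hb₁ : b ≠ 1) :
    ((b < ((d : ℝ) - 1) / ((d : ℝ) + 1) ∨ ((d : ℝ) + 1) / ((d : ℝ) - 1) < b) →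
      ∃ κ : ℝ, 1 < κ ∧ ∀ ξ' : ℂ, ‖ξ'‖ = 1 → ∀ R : ℂ, ‖R‖ = 1 →
        κ ≤ ‖(deriv (fIsing d ξ' (b : ℂ)) R)‖) ∧
    ((b = ((d : ℝ) - 1) / ((d : ℝ) + 1) ∨ b = ((d : ℝ) + 1) / ((d : ℝ) - 1)) →
      (∀ R : ℂ, ‖R‖ = 1 → 1 ≤ ‖(deriv (fIsing d ξ (b : ℂ)) R)‖) ∧
      (∀ R : ℂ, ‖R‖ = 1 →
        (‖(deriv (fIsing d ξ (b : ℂ)) R)‖ = 1 ↔ R = 1))) ∧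
    ((((d : ℝ) - 1) / ((d : ℝ) + 1) < b ∧ b < ((d : ℝ) + 1) / ((d : ℝ) - 1)) →
      ‖(deriv (fIsing d ξ (b : ℂ)) 1)‖ = (d : ℝ) * |1 - b| / (1 + b) ∧
      (d : ℝ) * |1 - b| / (1 + b) < 1) ∧
    (∀ ξ' : ℂ, ‖ξ'‖ = 1 → ∀ R : ℂ, ‖R‖ = 1 →
      ‖(deriv (fIsing d ξ' (b : ℂ)) R)‖ =
        ‖(deriv (fIsing d ξ (b : ℂ)) R)‖) ∧
    (∀ R S : ℂ, ‖R‖ = 1 → ‖S‖ = 1 →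
      |Complex.arg R| < |Complex.arg S| →
      ‖(deriv (fIsing d ξ (b : ℂ)) R)‖ <
        ‖(deriv (fIsing d ξ (b : ℂ)) S)‖) := by
  have hd₀ : d ≠ 0 := by omega
  have hnorm : ∀ ξ' : ℂ, ‖ξ'‖ = 1 → ∀ R : ℂ, ‖R‖ = 1 →
      ‖deriv (fIsing d ξ' b) R‖ = circleExpansion d b R.re := fun ξ' hξ' R hR => by
    rw [norm_deriv_fIsing d ξ' hR (ofReal_mul_add_one_ne_zero (by rwa [abs_of_pos hb₀]) hR),
      hξ', one_mul]
  have hre : ∀ R : ℂ, ‖R‖ = 1 → R.re ∈ Icc (-1) 1 := fun R hR =>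
    abs_le.1 (hR ▸ abs_re_le_norm R)
  have hmin : ∀ R : ℂ, ‖R‖ = 1 → minExpansion d b ≤ circleExpansion d b R.re := fun R hR =>
    minExpansion_le_circleExpansion hd₀ hb₀ hb₁ (hre R hR)
  refine ⟨fun h => ⟨_, one_lt_minExpansion hd hb₀ h, fun ξ' hξ' R hR => ?_⟩,
    fun h => ⟨fun R hR => ?_, fun R hR => ?_⟩, fun h => ⟨?_, minExpansion_lt_one hd h⟩,
    fun ξ' hξ' R hR => by rw [hnorm ξ' hξ' R hR, hnorm ξ hξ R hR], fun R S hR hS h => ?_⟩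
  · exact hnorm ξ' hξ' R hR ▸ hmin R hR
  · exact hnorm ξ hξ R hR ▸ minExpansion_eq_one hd h ▸ hmin R hR
  · rw [hnorm ξ hξ R hR, ← minExpansion_eq_one hd h,
      circleExpansion_eq_minExpansion_iff hd₀ hb₀ hb₁ (hre R hR).1,
      re_eq_one_iff_of_norm_eq_one hR]
  · rw [hnorm ξ hξ 1 norm_one, one_re, circleExpansion_one (by linarith), minExpansion]
  · rw [hnorm ξ hξ R hR, hnorm ξ hξ S hS]
    exact circleExpansion_strictAntiOn hd₀ hb₀ hb₁ (hre S hS).1 (hre R hR).1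
      (re_lt_re_of_abs_arg_lt (norm_ne_zero_iff.1 (hS ▸ one_ne_zero)) (hR.trans hS.symm) h)
end

section
/- (Theorem 3.9, characterization of non-repelling fixed points) Let d ≥ 2 be an integer and let b ∈ ((d−1)/(d+1), 1), and let θ_b be as in Lemma 3.8(i). Then for ξ ∈ ∂𝔻, the map f_{ξ,b} has a fixed point R ∈ ∂𝔻 with |f'_{ξ,b}(R)| ≤ 1 (an attracting or parabolic fixed point on the unit circle) if and only if ξ ∈ {e^{iθ} : θ ∈ [−θ_b, θ_b]}. -/
open Complex
open scoped Real

theorem eq_of_exp_ofReal_mul_I_eq {x y : ℝ} (h : exp (x * I) = exp (y * I))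
    (hxy : |x - y| < 2 * π) : x = y := by
  obtain ⟨n, hn⟩ := exp_eq_exp_iff_exists_int.1 h
  have hn' : x - y = 2 * π * n := by
    have : ((x - y : ℝ) : ℂ) = ((2 * π * n : ℝ) : ℂ) := by
      apply mul_right_cancel₀ I_ne_zero; push_cast; linear_combination hn
    exact_mod_cast this
  rw [hn', abs_mul, abs_of_pos Real.two_pi_pos, mul_lt_iff_lt_one_right Real.two_pi_pos,
    ← Int.cast_abs, ← Int.cast_one, Int.cast_lt, Int.abs_lt_one_iff] at hxy
  simpa [hxy, sub_eq_zero] using hn'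

section UnitCircle

variable {b : ℝ}

theorem one_add_sq_add_two_mul_pos (hb : |b| < 1) {x : ℝ} (hx : |x| ≤ 1) :
    0 < 1 + b ^ 2 + 2 * b * x := by
  rw [abs_lt] at hb; rw [abs_le] at hx
  nlinarith [sq_nonneg (b + x), mul_nonneg (sub_nonneg.2 hx.2) (neg_le_iff_add_nonneg.1 hx.1),
    mul_pos (sub_pos.2 hb.2) (neg_lt_iff_pos_add.1 hb.1)]

theorem add_mul_ofReal_mul_add_one_eq_of_norm_eq_one {z : ℂ} (hz : ‖z‖ = 1) :
    (z + b) * (b * z + 1) = ((1 + b ^ 2 + 2 * b * z.re : ℝ) : ℂ) * z := by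
  have hconj : z * (starRingEnd ℂ) z = 1 := by
    rw [mul_conj, normSq_eq_norm_sq, hz]; norm_num
  have hre : (z.re : ℂ) = (z + (starRingEnd ℂ) z) / 2 := by
    rw [add_conj]; push_cast; ring
  push_cast
  rw [hre]
  linear_combination (-(b : ℂ)) * hconj

theorem add_mul_ofReal_mul_add_one_ne_zero (hb : |b| < 1) {z : ℂ} (hz : ‖z‖ = 1) :
    (z + b) * (b * z + 1) ≠ 0 := by
  rw [add_mul_ofReal_mul_add_one_eq_of_norm_eq_one hz]
  refine mul_ne_zero (ofReal_ne_zero.2 (one_add_sq_add_two_mul_pos hb ?_).ne') ?_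
  · simpa [hz] using abs_re_le_norm z
  · exact norm_ne_zero_iff.1 (by simp [hz])

end UnitCircle

theorem HasDerivAt.pow_of_logDeriv {𝕜 𝔸 : Type*} [NontriviallyNormedField 𝕜] [NormedCommRing 𝔸]
    [NormedAlgebra 𝕜 𝔸] {f : 𝕜 → 𝔸} {c : 𝔸} {x : 𝕜} (hf : HasDerivAt f (f x * c) x) (n : ℕ) :
    HasDerivAt (fun y ↦ f y ^ n) (f x ^ n * (n * c)) x := by
  convert hf.fun_pow n using 1
  cases n <;> simp [pow_succ]; ring

noncomputable def mobiusAngularSpeed (b t : ℝ) : ℝ := (1 - b ^ 2) / (1 + b ^ 2 + 2 * b * Real.cos t)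

section MobiusOnCircle

variable {b : ℝ}

theorem hasDerivAt_exp_ofReal_mul_I (t : ℝ) :
    HasDerivAt (fun t : ℝ ↦ exp (t * I)) (exp (t * I) * I) t := by
  simpa using (((hasDerivAt_id (t : ℂ)).mul_const I).cexp).comp_ofReal

theorem hasDerivAt_mobius_exp (hb : |b| < 1) (t : ℝ) :
    HasDerivAt (fun t : ℝ ↦ (exp (t * I) + b) / (b * exp (t * I) + 1))
      ((exp (t * I) + b) / (b * exp (t * I) + 1) * (mobiusAngularSpeed b t * I)) t := by
  set z := exp (t * I) with hz_def
  have hne : (z + b) * (b * z + 1) ≠ 0 :=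
    add_mul_ofReal_mul_add_one_ne_zero hb (norm_exp_ofReal_mul_I t)
  have hv : z + b ≠ 0 := left_ne_zero_of_mul hne
  have hu : b * z + 1 ≠ 0 := right_ne_zero_of_mul hne
  have hspeed : (mobiusAngularSpeed b t : ℂ) = (1 - b ^ 2) * z / ((z + b) * (b * z + 1)) := by
    have hidentity :=
      add_mul_ofReal_mul_add_one_eq_of_norm_eq_one (b := b) (norm_exp_ofReal_mul_I t)
    rw [exp_ofReal_mul_I_re, ← hz_def] at hidentity
    rw [eq_div_iff hne, hidentity, mobiusAngularSpeed, ofReal_div, div_mul_eq_mul_div,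
      mul_left_comm, mul_div_cancel_left₀ _ (left_ne_zero_of_mul (hidentity ▸ hne))]
    push_cast; ring
  have hE := hasDerivAt_exp_ofReal_mul_I t
  refine ((hE.add_const (b : ℂ)).fun_div ((hE.const_mul (b : ℂ)).add_const 1) hu).congr_deriv ?_
  rw [← hz_def, hspeed]
  field_simp
  ring

end MobiusOnCircle

theorem hasDerivAt_fIsing_exp {b : ℝ} (hb : |b| < 1) (d : ℕ) (ξ : ℂ) (t : ℝ) :
    HasDerivAt (fun t : ℝ ↦ fIsing d ξ b (exp (t * I)))
      (fIsing d ξ b (exp (t * I)) * (d * mobiusAngularSpeed b t * I)) t := by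
  refine (((hasDerivAt_mobius_exp hb t).pow_of_logDeriv d).const_mul ξ).congr_deriv ?_
  rw [fIsing]; ring

noncomputable def fixedParam (d : ℕ) (b t : ℝ) : ℝ :=
  ∫ s in (0 : ℝ)..t, (1 - d * mobiusAngularSpeed b s)

section FixedParam

variable {d : ℕ} {b : ℝ}

theorem continuous_mobiusAngularSpeed (hb : |b| < 1) : Continuous (mobiusAngularSpeed b) := by
  unfold mobiusAngularSpeed
  fun_prop (disch := exact fun s ↦ (one_add_sq_add_two_mul_pos hb (Real.abs_cos_le_one s)).ne')

theorem mobiusAngularSpeed_pos (hb : |b| < 1) (t : ℝ) : 0 < mobiusAngularSpeed b t := by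
  have : b ^ 2 < 1 := by rw [← sq_abs]; nlinarith [abs_nonneg b]
  exact div_pos (by linarith) (one_add_sq_add_two_mul_pos hb (Real.abs_cos_le_one t))

theorem hasDerivAt_fixedParam (hb : |b| < 1) (t : ℝ) :
    HasDerivAt (fixedParam d b) (1 - d * mobiusAngularSpeed b t) t :=
  (continuous_const.sub (continuous_const.mul (continuous_mobiusAngularSpeed hb)))
    |>.integral_hasStrictDerivAt 0 t |>.hasDerivAt

theorem fixedParam_zero : fixedParam d b 0 = 0 := intervalIntegral.integral_same

theorem mobiusAngularSpeed_neg (t : ℝ) : mobiusAngularSpeed b (-t) = mobiusAngularSpeed b t := by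
  rw [mobiusAngularSpeed, mobiusAngularSpeed, Real.cos_neg]

theorem fixedParam_neg (t : ℝ) : fixedParam d b (-t) = -fixedParam d b t := by
  have h := intervalIntegral.integral_comp_neg (a := 0) (b := t)
    (fun s ↦ 1 - d * mobiusAngularSpeed b s)
  simp only [mobiusAngularSpeed_neg, neg_zero] at h
  rw [fixedParam, fixedParam, h, intervalIntegral.integral_symm]

theorem fIsing_exp_fixedParam (hb : |b| < 1) (t : ℝ) :
    fIsing d (exp (fixedParam d b t * I)) b (exp (t * I)) = exp (t * I) := by
  -- `G` has logarithmic derivative `i (d · speed + ψ' - 1) = 0`.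
  let G : ℝ → ℂ := fun s ↦ fIsing d 1 b (exp (s * I)) * exp ((fixedParam d b s - s : ℝ) * I)
  have hG : ∀ s, HasDerivAt G 0 s := by
    intro s
    have hphase : HasDerivAt (fun s : ℝ ↦ ((fixedParam d b s - s : ℝ) : ℂ) * I)
        ((-(d * mobiusAngularSpeed b s) : ℝ) * I) s := by
      refine (((hasDerivAt_fixedParam hb s).sub (hasDerivAt_id s)).ofReal_comp.mul_const I)
        |>.congr_deriv ?_
      simp
    refine ((hasDerivAt_fIsing_exp hb d 1 s).mul hphase.cexp).congr_deriv ?_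
    push_cast; ring
  have hG0 : G 0 = 1 := by
    have hb1 : (b : ℂ) + 1 ≠ 0 := by exact_mod_cast (by linarith [abs_lt.1 hb] : 0 < b + 1).ne'
    simp [G, fixedParam_zero, fIsing, add_comm 1 (b : ℂ), div_self hb1]
  have hGt : G t = 1 := (is_const_of_deriv_eq_zero (fun s ↦ (hG s).differentiableAt)
    (fun s ↦ (hG s).deriv) t 0).trans hG0
  have hsplit :
      exp (fixedParam d b t * I) = exp (t * I) * exp ((fixedParam d b t - t : ℝ) * I) := by
    rw [← exp_add]; push_cast; ring_nf
  calc fIsing d (exp (fixedParam d b t * I)) b (exp (t * I))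
      = exp (t * I) * G t := by simp only [G, fIsing, hsplit]; ring
    _ = exp (t * I) := by rw [hGt, mul_one]

end FixedParam

section FixedPoints

variable {d : ℕ} {b : ℝ} {ξ : ℂ}

theorem fIsing_exp_eq_self_iff (hb : |b| < 1) (t : ℝ) :
    fIsing d ξ b (exp (t * I)) = exp (t * I) ↔ ξ = exp (fixedParam d b t * I) := by
  refine ⟨fun h ↦ ?_, fun h ↦ h ▸ fIsing_exp_fixedParam hb t⟩
  have hne := add_mul_ofReal_mul_add_one_ne_zero hb (norm_exp_ofReal_mul_I t)
  have hq := pow_ne_zero d (div_ne_zero (left_ne_zero_of_mul hne) (right_ne_zero_of_mul hne))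
  exact mul_right_cancel₀ hq (h.trans (fIsing_exp_fixedParam hb t).symm)

theorem deriv_fIsing_exp_of_eq_self (hb : |b| < 1) {t : ℝ}
    (h : fIsing d ξ b (exp (t * I)) = exp (t * I)) :
    deriv (fIsing d ξ b) (exp (t * I)) = (d * mobiusAngularSpeed b t : ℝ) := by
  have hu : (b : ℂ) * exp (t * I) + 1 ≠ 0 :=
    right_ne_zero_of_mul (add_mul_ofReal_mul_add_one_ne_zero hb (norm_exp_ofReal_mul_I t))
  have hdiff : DifferentiableAt ℂ (fIsing d ξ b) (exp (t * I)) := by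
    unfold fIsing
    fun_prop (disch := exact hu)
  -- Compare the chain rule for `t ↦ f (e^{it})` with its logarithmic derivative `i d · speed`.
  have hchain := hdiff.hasDerivAt.comp t (hasDerivAt_exp_ofReal_mul_I t)
  have hunique := hchain.unique (hasDerivAt_fIsing_exp hb d ξ t)
  rw [h] at hunique
  have hexp : exp (t * I) * I ≠ 0 := mul_ne_zero (exp_ne_zero _) I_ne_zero
  push_cast
  exact mul_right_cancel₀ hexp (by rw [hunique]; ring)

theorem norm_deriv_fIsing_exp_of_eq_self (hb : |b| < 1) {t : ℝ}
    (h : fIsing d ξ b (exp (t * I)) = exp (t * I)) :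
    ‖deriv (fIsing d ξ b) (exp (t * I))‖ = d * mobiusAngularSpeed b t := by
  rw [deriv_fIsing_exp_of_eq_self hb h, norm_real, Real.norm_of_nonneg
    (mul_nonneg d.cast_nonneg (mobiusAngularSpeed_pos hb t).le)]

theorem exists_fIsing_eq_self_and_norm_deriv_le_one_iff (hb : |b| < 1) :
    (∃ R : ℂ, ‖R‖ = 1 ∧ fIsing d ξ b R = R ∧ ‖deriv (fIsing d ξ b) R‖ ≤ 1) ↔
      ∃ t : ℝ, |t| ≤ π ∧ ξ = exp (fixedParam d b t * I) ∧ d * mobiusAngularSpeed b t ≤ 1 := by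
  constructor
  · rintro ⟨R, hR, hfix, hderiv⟩
    have hR' : exp (arg R * I) = R := by simpa [hR] using norm_mul_exp_arg_mul_I R
    rw [← hR'] at hfix hderiv
    rw [norm_deriv_fIsing_exp_of_eq_self hb hfix] at hderiv
    exact ⟨arg R, abs_arg_le_pi R, (fIsing_exp_eq_self_iff hb _).1 hfix, hderiv⟩
  · rintro ⟨t, -, hξ, ht⟩
    have hfix := (fIsing_exp_eq_self_iff hb t).2 hξ
    exact ⟨_, norm_exp_ofReal_mul_I t, hfix,
      (norm_deriv_fIsing_exp_of_eq_self hb hfix).trans_le ht⟩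

end FixedPoints

section ParabolicAngle

variable {d : ℕ} {b : ℝ}

theorem mobiusAngularSpeed_le_iff (hb0 : 0 < b) (hb1 : b < 1) {s T : ℝ} (hs : |s| ≤ π)
    (hT0 : 0 ≤ T) (hTπ : T ≤ π) :
    mobiusAngularSpeed b s ≤ mobiusAngularSpeed b T ↔ |s| ≤ T := by
  have hb : |b| < 1 := abs_lt.2 ⟨by linarith, hb1⟩
  rw [mobiusAngularSpeed, mobiusAngularSpeed, div_le_div_iff_of_pos_left (by nlinarith)
      (one_add_sq_add_two_mul_pos hb (Real.abs_cos_le_one s))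
      (one_add_sq_add_two_mul_pos hb (Real.abs_cos_le_one T)),
    add_le_add_iff_left, mul_le_mul_iff_right₀ (by positivity), ← Real.cos_abs s]
  exact Real.strictAntiOn_cos.le_iff_ge ⟨hT0, hTπ⟩ ⟨abs_nonneg s, hs⟩

theorem natCast_mul_mobiusAngularSpeed_le_one_iff (hb0 : 0 < b) (hb1 : b < 1) {s T : ℝ}
    (hs : |s| ≤ π) (hT0 : 0 ≤ T) (hTπ : T ≤ π) (hT : d * mobiusAngularSpeed b T = 1) :
    d * mobiusAngularSpeed b s ≤ 1 ↔ |s| ≤ T := by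
  have hd : (0 : ℝ) < d := Nat.cast_pos.2 (Nat.pos_of_ne_zero (by rintro rfl; simp at hT))
  rw [← hT, mul_le_mul_iff_right₀ hd, mobiusAngularSpeed_le_iff hb0 hb1 hs hT0 hTπ]

theorem monotoneOn_fixedParam (hb0 : 0 < b) (hb1 : b < 1) {T : ℝ} (hT0 : 0 ≤ T) (hTπ : T ≤ π)
    (hT : d * mobiusAngularSpeed b T = 1) : MonotoneOn (fixedParam d b) (Set.Icc (-T) T) := by
  have hb : |b| < 1 := abs_lt.2 ⟨by linarith, hb1⟩
  have hdiff : Differentiable ℝ (fixedParam d b) := fun t ↦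
    (hasDerivAt_fixedParam hb t).differentiableAt
  refine monotoneOn_of_deriv_nonneg (convex_Icc _ _) hdiff.continuous.continuousOn
    hdiff.differentiableOn fun s hs ↦ ?_
  rw [interior_Icc] at hs
  have hsT : |s| ≤ T := abs_le.2 ⟨hs.1.le, hs.2.le⟩
  rw [(hasDerivAt_fixedParam hb s).deriv, sub_nonneg]
  exact (natCast_mul_mobiusAngularSpeed_le_one_iff hb0 hb1 (hsT.trans hTπ) hT0 hTπ hT).2 hsT

theorem image_fixedParam_Icc (hb0 : 0 < b) (hb1 : b < 1) {T : ℝ} (hT0 : 0 ≤ T) (hTπ : T ≤ π)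
    (hT : d * mobiusAngularSpeed b T = 1) :
    fixedParam d b '' Set.Icc (-T) T = Set.Icc (-fixedParam d b T) (fixedParam d b T) := by
  have hb : |b| < 1 := abs_lt.2 ⟨by linarith, hb1⟩
  rw [← fixedParam_neg]
  exact ContinuousOn.image_Icc_of_monotoneOn (by linarith)
    (fun t _ ↦ (hasDerivAt_fixedParam hb t).continuousAt.continuousWithinAt)
    (monotoneOn_fixedParam hb0 hb1 hT0 hTπ hT)

theorem fixedParam_le_self (hb : |b| < 1) {t : ℝ} (ht : 0 ≤ t) : fixedParam d b t ≤ t := by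
  have hint :
      IntervalIntegrable (fun s ↦ 1 - d * mobiusAngularSpeed b s) MeasureTheory.volume 0 t :=
    (continuous_const.sub (continuous_const.mul (continuous_mobiusAngularSpeed hb)))
      |>.intervalIntegrable _ _
  calc fixedParam d b t ≤ ∫ _ in (0 : ℝ)..t, (1 : ℝ) :=
        intervalIntegral.integral_mono_on ht hint intervalIntegrable_const fun s _ ↦
          sub_le_self 1 (mul_nonneg d.cast_nonneg (mobiusAngularSpeed_pos hb s).le)
    _ = t := by simp

theorem exists_parabolic_angle (hb0 : 0 < b) (hb1 : b < 1) {θ : ℝ} (hθ : θ ∈ Set.Ioo 0 π)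
    (hpar : ∃ R : ℂ, ‖R‖ = 1 ∧ fIsing d (exp (θ * I)) b R = R ∧
      deriv (fIsing d (exp (θ * I)) b) R = 1) :
    ∃ T : ℝ, 0 ≤ T ∧ T ≤ π ∧ d * mobiusAngularSpeed b T = 1 ∧ θ = fixedParam d b T := by
  have hb : |b| < 1 := abs_lt.2 ⟨by linarith, hb1⟩
  obtain ⟨R, hR, hfix, hderiv⟩ := hpar
  have hR' : exp (arg R * I) = R := by simpa [hR] using norm_mul_exp_arg_mul_I R
  rw [← hR'] at hfix hderiv
  have hspeed : d * mobiusAngularSpeed b (arg R) = 1 := by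
    exact_mod_cast (deriv_fIsing_exp_of_eq_self hb hfix).symm.trans hderiv
  have hexp := (fIsing_exp_eq_self_iff hb _).1 hfix
  set T := |arg R|
  have hT : d * mobiusAngularSpeed b T = 1 := by
    rcases abs_choice (arg R) with h | h <;> simp only [T, h, mobiusAngularSpeed_neg, hspeed]
  have hTπ : T ≤ π := abs_arg_le_pi R
  have hT0 : 0 ≤ T := abs_nonneg _
  have hψ0 : 0 ≤ fixedParam d b T := fixedParam_zero (d := d) (b := b) ▸
    monotoneOn_fixedParam hb0 hb1 hT0 hTπ hT ⟨by linarith, hT0⟩ ⟨by linarith, le_rfl⟩ hT0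
  have hψπ : fixedParam d b T ≤ π := (fixedParam_le_self hb hT0).trans hTπ
  refine ⟨T, hT0, hTπ, hT, ?_⟩
  rcases abs_choice (arg R) with h | h
  · rw [← h] at hexp
    exact eq_of_exp_ofReal_mul_I_eq hexp (abs_sub_lt_iff.2 ⟨by linarith [hθ.2], by linarith [hθ.1]⟩)
  · rw [← neg_neg (arg R), ← h, fixedParam_neg] at hexp
    linarith [hθ.1, eq_of_exp_ofReal_mul_I_eq hexp
      (abs_sub_lt_iff.2 ⟨by linarith [hθ.2], by linarith [hθ.1]⟩)]

end ParabolicAngle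

/-- Theorem 3.9: for `b ∈ ((d-1)/(d+1), 1)` and `θ_b` the parabolic parameter of
Lemma 3.8(i), the map `f_{ξ,b}` (`|ξ| = 1`) has an attracting or parabolic fixed point
on the unit circle if and only if `ξ = e^{iθ}` with `θ ∈ [-θ_b, θ_b]`. -/
theorem fIsing_nonrepelling_fixed_point_iff (d : ℕ) (hd : 2 ≤ d) (b : ℝ)
    (hb₁ : ((d : ℝ) - 1) / ((d : ℝ) + 1) < b) (hb₂ : b < 1)
    (θb : ℝ) (hθb : θb ∈ Set.Ioo 0 Real.pi)
    (hpar : ∃ R : ℂ, ‖R‖ = 1 ∧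
      fIsing d (Complex.exp (θb * Complex.I)) (b : ℂ) R = R ∧
      deriv (fIsing d (Complex.exp (θb * Complex.I)) (b : ℂ)) R = 1) :
    ∀ ξ : ℂ, ‖ξ‖ = 1 →
      ((∃ R : ℂ, ‖R‖ = 1 ∧ fIsing d ξ (b : ℂ) R = R ∧
          ‖deriv (fIsing d ξ (b : ℂ)) R‖ ≤ 1) ↔
        ∃ θ : ℝ, -θb ≤ θ ∧ θ ≤ θb ∧ ξ = Complex.exp (θ * Complex.I)) := by
  intro ξ _
  have hdR : (2 : ℝ) ≤ d := by exact_mod_cast hd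
  have hb0 : 0 < b := lt_of_le_of_lt (div_nonneg (by linarith) (by positivity)) hb₁
  have hb : |b| < 1 := abs_lt.2 ⟨by linarith, hb₂⟩
  obtain ⟨T, hT0, hTπ, hT, rfl⟩ := exists_parabolic_angle hb0 hb₂ hθb hpar
  have himage := image_fixedParam_Icc hb0 hb₂ hT0 hTπ hT
  rw [exists_fIsing_eq_self_and_norm_deriv_le_one_iff hb]
  constructor
  · rintro ⟨t, htπ, rfl, ht⟩
    have htT := (natCast_mul_mobiusAngularSpeed_le_one_iff hb0 hb₂ htπ hT0 hTπ hT).1 ht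
    obtain ⟨h₁, h₂⟩ := himage ▸ Set.mem_image_of_mem (fixedParam d b) (abs_le.1 htT)
    exact ⟨_, h₁, h₂, rfl⟩
  · rintro ⟨θ, h₁, h₂, rfl⟩
    obtain ⟨t, ht, rfl⟩ : θ ∈ fixedParam d b '' Set.Icc (-T) T := himage ▸ ⟨h₁, h₂⟩
    have htT := abs_le.2 ht
    exact ⟨t, htT.trans hTπ, rfl,
      (natCast_mul_mobiusAngularSpeed_le_one_iff hb0 hb₂ (htT.trans hTπ) hT0 hTπ hT).2 htT⟩
end

section
/- (Theorem 3.1(i), ferromagnetic invariant arc) Let d ≥ 2 be an integer, let b ∈ ((d−1)/(d+1), 1), and let θ_b be as in Lemma 3.8(i). Then for every θ ∈ (−θ_b, θ_b) and ξ = e^{iθ}, there exists a closed circular arc I ⊂ ∂𝔻 having 1 as a boundary point, with −1 ∉ I, such that f_{ξ,b}(I) ⊆ I. In particular, the orbit of ξ under f_{ξ,b} avoids −1: f_{ξ,b}^{∘n}(ξ) ≠ −1 for all n ≥ 0. -/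
/-- The closed circular arc `{e^{it} : t between 0 and s}` on the unit circle; its
boundary points are `1` and `e^{is}`. -/
def circArc (s : ℝ) : Set ℂ := (fun t : ℝ => Complex.exp (t * Complex.I)) '' Set.uIcc 0 s

open Real Set
open Complex (I)

theorem Complex.arg_eq_arctan_of_re_pos {z : ℂ} (hz : 0 < z.re) :
    z.arg = Real.arctan (z.im / z.re) := by
  have hlt := Complex.abs_arg_lt_pi_div_two_iff.2 (Or.inl hz)
  rw [← Complex.tan_arg, Real.arctan_tan (abs_lt.1 hlt).1 (abs_lt.1 hlt).2]

theorem Complex.conj_div_self_eq_exp_arg {w : ℂ} (hw : w ≠ 0) :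
    (starRingEnd ℂ) w / w = Complex.exp (-(2 * w.arg) * I) := by
  have hpolar := Complex.norm_mul_exp_arg_mul_I w
  have hnorm : (‖w‖ : ℂ) ≠ 0 := by exact_mod_cast norm_ne_zero_iff.2 hw
  conv_lhs => rw [← hpolar]
  rw [map_mul, Complex.conj_ofReal, ← Complex.exp_conj, map_mul, Complex.conj_ofReal,
    Complex.conj_I, mul_div_mul_left _ _ hnorm, ← Complex.exp_sub]
  ring_nf

theorem exp_mul_I_eq_or_of_cos_eq {s t : ℝ} (h : cos s = cos t) :
    Complex.exp (s * I) = Complex.exp (t * I) ∨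
      Complex.exp (s * I) = Complex.exp ((-t : ℝ) * I) := by
  have hsin : sin s ^ 2 = sin t ^ 2 := by rw [sin_sq, sin_sq, h]
  rcases sq_eq_sq_iff_eq_or_eq_neg.1 hsin with hs | hs
  · left
    apply Complex.ext <;> simp [Complex.exp_ofReal_mul_I_re, Complex.exp_ofReal_mul_I_im, h, hs]
  · right
    apply Complex.ext <;>
      simp only [Complex.exp_ofReal_mul_I_re, Complex.exp_ofReal_mul_I_im, cos_neg, sin_neg, h, hs]

theorem eq_zero_of_exp_mul_I_eq_one {x : ℝ} (h : Complex.exp (x * I) = 1)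
    (hlo : -(2 * π) < x) (hhi : x < 2 * π) : x = 0 := by
  obtain ⟨n, hn⟩ := Complex.exp_eq_one_iff.1 h
  have hx : x = n * (2 * π) := by simpa using congrArg Complex.im hn
  have hpi := pi_pos
  have hn0 : n = 0 := by
    have : |(n : ℝ)| < 1 := abs_lt.2 ⟨by nlinarith, by nlinarith⟩
    exact Int.abs_lt_one_iff.1 (by exact_mod_cast this)
  simp [hx, hn0]

theorem neg_one_notMem_circArc {s : ℝ} (hs₁ : -π < s) (hs₂ : s < π) :
    (-1 : ℂ) ∉ circArc s := by
  rintro ⟨t, ht, hexp : Complex.exp (t * I) = -1⟩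
  have hlo : -π < t := lt_of_lt_of_le (lt_min (by linarith [pi_pos]) hs₁) ht.1
  have hhi : t < π := lt_of_le_of_lt ht.2 (max_lt pi_pos hs₂)
  have h1 : Complex.exp (((t - π : ℝ)) * I) = 1 := by
    rw [Complex.ofReal_sub, sub_mul, Complex.exp_sub, hexp, Complex.exp_pi_mul_I]
    norm_num
  linarith [eq_zero_of_exp_mul_I_eq_one h1 (by linarith) (by linarith)]

theorem mapsTo_circArc {F : ℂ → ℂ} {g : ℝ → ℝ} (hF : ∀ t : ℝ,
    F (Complex.exp (t * I)) = Complex.exp (g t * I)) (hg : Monotone g) {s : ℝ}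
    (h₀ : g 0 ∈ uIcc 0 s) (hs : g s ∈ uIcc 0 s) : MapsTo F (circArc s) (circArc s) := by
  rintro _ ⟨t, ht, rfl⟩
  exact ⟨g t, uIcc_subset_uIcc h₀ hs (hg.mapsTo_uIcc ht), (hF t).symm⟩

section circle

variable {b : ℝ}

theorem one_add_mul_cos_pos (hb : |b| < 1) (t : ℝ) : 0 < 1 + b * cos t := by
  have hbc : |b * cos t| < 1 := by
    rw [abs_mul]
    nlinarith [abs_nonneg b, abs_cos_le_one t]
  linarith [neg_abs_le (b * cos t)]

theorem one_add_two_mul_cos_add_sq_pos (hb : |b| < 1) (t : ℝ) :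
    0 < 1 + 2 * b * cos t + b ^ 2 := by
  nlinarith [one_add_mul_cos_pos hb t, sin_sq_add_cos_sq t, sq_nonneg (b * sin t)]

theorem arg_one_add_mul_exp_mul_I (hb : |b| < 1) (t : ℝ) :
    (1 + b * Complex.exp (t * I)).arg = arctan (b * sin t / (1 + b * cos t)) := by
  have hre : (1 + b * Complex.exp (t * I)).re = 1 + b * cos t := by
    simp [Complex.exp_ofReal_mul_I_re]
  have him : (1 + b * Complex.exp (t * I)).im = b * sin t := by
    simp [Complex.exp_ofReal_mul_I_im]
  rw [Complex.arg_eq_arctan_of_re_pos (hre ▸ one_add_mul_cos_pos hb t), hre, him]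

theorem one_add_mul_exp_mul_I_ne_zero (hb : |b| < 1) (t : ℝ) :
    1 + b * Complex.exp (t * I) ≠ 0 := fun h => by
  have := congrArg Complex.re h
  simp only [Complex.add_re, Complex.one_re, Complex.re_ofReal_mul,
    Complex.exp_ofReal_mul_I_re, Complex.zero_re] at this
  linarith [one_add_mul_cos_pos hb t]

theorem arg_one_add_mul_exp_neg_mul_I (hb : |b| < 1) (t : ℝ) :
    (1 + b * Complex.exp ((-t : ℝ) * I)).arg = -(1 + b * Complex.exp (t * I)).arg := by
  rw [arg_one_add_mul_exp_mul_I hb, arg_one_add_mul_exp_mul_I hb, sin_neg, cos_neg,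
    ← arctan_neg]
  ring_nf

theorem hasDerivAt_arg_one_add_mul_exp_mul_I (hb : |b| < 1) (t : ℝ) :
    HasDerivAt (fun t : ℝ => (1 + b * Complex.exp (t * I)).arg)
      (b * (cos t + b) / (1 + 2 * b * cos t + b ^ 2)) t := by
  have hx := one_add_mul_cos_pos hb t
  have hD := one_add_two_mul_cos_add_sq_pos hb t
  have pyth := sin_sq_add_cos_sq t
  have hquot : HasDerivAt (fun t => b * sin t / (1 + b * cos t))
      ((b * cos t * (1 + b * cos t) - b * sin t * (b * -sin t)) / (1 + b * cos t) ^ 2) t :=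
    ((hasDerivAt_sin t).const_mul b).div ((((hasDerivAt_cos t).const_mul b).const_add 1)) hx.ne'
  rw [funext (arg_one_add_mul_exp_mul_I hb)]
  refine ((hasDerivAt_arctan _).comp t hquot).congr_deriv ?_
  have hden : 1 + (b * sin t / (1 + b * cos t)) ^ 2
      = (1 + 2 * b * cos t + b ^ 2) / (1 + b * cos t) ^ 2 := by
    field_simp
    linear_combination b ^ 2 * pyth
  rw [hden]
  field_simp
  linear_combination b ^ 2 * pyth

theorem arg_one_add_mul_exp_mul_I_lt_half (hb : |b| < 1) {t : ℝ} (ht₀ : 0 < t)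
    (htπ : t < π) : (1 + b * Complex.exp (t * I)).arg < t / 2 := by
  have hc : 0 < cos (t / 2) := cos_pos_of_mem_Ioo ⟨by linarith, by linarith⟩
  have hs : 0 < sin (t / 2) := sin_pos_of_pos_of_lt_pi (by linarith) (by linarith)
  have hsin : sin t = 2 * sin (t / 2) * cos (t / 2) := by
    rw [← sin_two_mul, mul_div_cancel₀ t two_ne_zero]
  have hcos : cos t = 2 * cos (t / 2) ^ 2 - 1 := by
    rw [← cos_two_mul, mul_div_cancel₀ t two_ne_zero]
  have hb' := abs_lt.1 hb
  -- After halving the angle the inequality reduces to `0 < (1 - b) sin (t/2)`.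
  have hlt : b * sin t / (1 + b * cos t) < tan (t / 2) := by
    rw [tan_eq_sin_div_cos, div_lt_div_iff₀ (one_add_mul_cos_pos hb t) hc, hsin, hcos]
    nlinarith [mul_pos hs (sub_pos.2 hb'.2)]
  rw [arg_one_add_mul_exp_mul_I hb]
  calc arctan (b * sin t / (1 + b * cos t)) < arctan (tan (t / 2)) := arctan_strictMono hlt
    _ = t / 2 := arctan_tan (by linarith) (by linarith)

end circle

noncomputable def isingLift (d : ℕ) (θ b t : ℝ) : ℝ :=
  θ + d * t - 2 * d * (1 + b * Complex.exp (t * I)).arg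

noncomputable def isingLiftDeriv (d : ℕ) (b t : ℝ) : ℝ :=
  d * (1 - b ^ 2) / (1 + 2 * b * cos t + b ^ 2)

section isingLift

variable {b : ℝ}

theorem fIsing_exp_mul_I (hb : |b| < 1) (d : ℕ) (θ t : ℝ) :
    fIsing d (Complex.exp (θ * I)) b (Complex.exp (t * I)) =
      Complex.exp (isingLift d θ b t * I) := by
  have hw := one_add_mul_exp_mul_I_ne_zero hb t
  -- `e^{it} + b = e^{it} · conj (1 + b e^{it})`, so the Möbius factor has modulus one.
  have hmob : (Complex.exp (t * I) + b) / (b * Complex.exp (t * I) + 1) =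
      Complex.exp (t * I) * ((starRingEnd ℂ) (1 + b * Complex.exp (t * I)) /
        (1 + b * Complex.exp (t * I))) := by
    rw [add_comm _ (1 : ℂ), mul_div_assoc']
    congr 1
    simp only [map_add, map_one, map_mul, Complex.conj_ofReal, ← Complex.exp_conj,
      Complex.conj_I]
    rw [mul_add, mul_one, mul_left_comm, ← Complex.exp_add]
    ring_nf
    simp
  rw [fIsing, hmob, Complex.conj_div_self_eq_exp_arg hw, ← Complex.exp_add,
    ← Complex.exp_nat_mul, ← Complex.exp_add, isingLift]
  congr 1
  push_cast
  ring

theorem hasDerivAt_isingLift (hb : |b| < 1) (d : ℕ) (θ t : ℝ) :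
    HasDerivAt (isingLift d θ b) (isingLiftDeriv d b t) t := by
  have hD := one_add_two_mul_cos_add_sq_pos hb t
  refine ((((hasDerivAt_id t).const_mul (d : ℝ)).const_add θ).sub
    ((hasDerivAt_arg_one_add_mul_exp_mul_I hb t).const_mul (2 * (d : ℝ)))).congr_deriv ?_
  rw [isingLiftDeriv]
  field_simp
  ring

theorem isingLift_strictMono (hb : |b| < 1) {d : ℕ} (hd : 0 < d) (θ : ℝ) :
    StrictMono (isingLift d θ b) := by
  refine strictMono_of_deriv_pos fun t => ?_
  rw [(hasDerivAt_isingLift hb d θ t).deriv, isingLiftDeriv]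
  have := abs_lt.1 hb
  have hd' : (0 : ℝ) < d := by exact_mod_cast hd
  exact div_pos (mul_pos hd' (by nlinarith)) (one_add_two_mul_cos_add_sq_pos hb t)

theorem continuous_isingLift (hb : |b| < 1) (d : ℕ) (θ : ℝ) : Continuous (isingLift d θ b) :=
  continuous_iff_continuousAt.2 fun t => (hasDerivAt_isingLift hb d θ t).continuousAt

theorem isingLift_zero (hb : |b| < 1) (d : ℕ) (θ : ℝ) : isingLift d θ b 0 = θ := by
  have h : (0 : ℝ) ≤ 1 + b := by linarith [(abs_lt.1 hb).1]
  have harg : (1 + b * Complex.exp ((0 : ℝ) * I)).arg = 0 := by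
    rw [Complex.ofReal_zero, zero_mul, Complex.exp_zero, mul_one, ← Complex.ofReal_one,
      ← Complex.ofReal_add, Complex.arg_ofReal_of_nonneg h]
  rw [isingLift, harg]
  simp

theorem isingLift_neg (hb : |b| < 1) (d : ℕ) (θ t : ℝ) :
    isingLift d (-θ) b (-t) = -isingLift d θ b t := by
  rw [isingLift, isingLift, arg_one_add_mul_exp_neg_mul_I hb]
  ring

theorem differentiableAt_fIsing (d : ℕ) (ξ : ℂ) {β z : ℂ} (hz : β * z + 1 ≠ 0) :
    DifferentiableAt ℂ (fIsing d ξ β) z := by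
  unfold fIsing
  fun_prop (disch := exact hz)

theorem deriv_fIsing_exp_mul_I (hb : |b| < 1) (d : ℕ) (θ t : ℝ) :
    deriv (fIsing d (Complex.exp (θ * I)) b) (Complex.exp (t * I)) * Complex.exp (t * I) =
      isingLiftDeriv d b t * fIsing d (Complex.exp (θ * I)) b (Complex.exp (t * I)) := by
  let f := fIsing d (Complex.exp (θ * I)) b
  have hden : (b : ℂ) * Complex.exp (t * I) + 1 ≠ 0 := by
    rw [add_comm]; exact one_add_mul_exp_mul_I_ne_zero hb t
  have hf : DifferentiableAt ℂ f (Complex.exp (t * I)) := differentiableAt_fIsing d _ hden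
  have hexp : HasDerivAt (fun z : ℂ => Complex.exp (z * I)) (Complex.exp (t * I) * I) t := by
    simpa using ((hasDerivAt_id (t : ℂ)).mul_const I).cexp
  have hchain : HasDerivAt (fun s : ℝ => f (Complex.exp (s * I)))
      (deriv f (Complex.exp (t * I)) * (Complex.exp (t * I) * I)) t :=
    (hf.hasDerivAt.comp (t : ℂ) hexp).comp_ofReal (e := fun z : ℂ => f (Complex.exp (z * I)))
  have hlift : HasDerivAt (fun s : ℝ => f (Complex.exp (s * I)))
      (Complex.exp (isingLift d θ b t * I) * (isingLiftDeriv d b t * I)) t := by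
    simp only [f, fIsing_exp_mul_I hb]
    exact ((hasDerivAt_isingLift hb d θ t).ofReal_comp.mul_const I).cexp
  have h := hchain.unique hlift
  rw [← fIsing_exp_mul_I hb] at h
  apply mul_right_cancel₀ Complex.I_ne_zero
  linear_combination h

end isingLift

noncomputable def parabolicCos (d : ℕ) (b : ℝ) : ℝ :=
  (d * (1 - b ^ 2) - (1 + b ^ 2)) / (2 * b)

noncomputable def parabolicTime (d : ℕ) (b : ℝ) : ℝ := arccos (parabolicCos d b)

/-- The paper's `θ_b`: the parameter for which `parabolicTime` is a fixed point of `isingLift`. -/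
noncomputable def parabolicAngle (d : ℕ) (b : ℝ) : ℝ :=
  2 * d * (1 + b * Complex.exp (parabolicTime d b * I)).arg - (d - 1) * parabolicTime d b

section parabolic

variable {d : ℕ} {b : ℝ}

theorem isingLiftDeriv_sub_one (hb₀ : b ≠ 0) (hb : |b| < 1) (t : ℝ) :
    isingLiftDeriv d b t - 1 =
      2 * b * (parabolicCos d b - cos t) / (1 + 2 * b * cos t + b ^ 2) := by
  have hD := (one_add_two_mul_cos_add_sq_pos hb t).ne'
  rw [isingLiftDeriv, div_sub_one hD, parabolicCos]
  congr 1
  field_simp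
  ring

theorem isingLift_parabolicTime (θ : ℝ) :
    isingLift d θ b (parabolicTime d b) = parabolicTime d b + θ - parabolicAngle d b := by
  rw [isingLift, parabolicAngle]
  ring

theorem isingLift_neg_parabolicTime (hb : |b| < 1) (θ : ℝ) :
    isingLift d θ b (-parabolicTime d b) = -parabolicTime d b + θ + parabolicAngle d b := by
  rw [← neg_neg θ, isingLift_neg hb, isingLift_parabolicTime]
  ring

theorem pos_of_sub_one_div_add_one_lt (hd : 0 < d)
    (hb₁ : ((d : ℝ) - 1) / ((d : ℝ) + 1) < b) : 0 < b := by
  have hd' : (1 : ℝ) ≤ d := by exact_mod_cast hd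
  exact lt_of_le_of_lt (div_nonneg (by linarith) (by linarith)) hb₁

theorem abs_lt_one_of_sub_one_div_add_one_lt (hd : 0 < d)
    (hb₁ : ((d : ℝ) - 1) / ((d : ℝ) + 1) < b) (hb₂ : b < 1) : |b| < 1 :=
  abs_lt.2 ⟨by linarith [pos_of_sub_one_div_add_one_lt hd hb₁], hb₂⟩

theorem parabolicCos_mem_Ioo (hd : 0 < d) (hb₁ : ((d : ℝ) - 1) / ((d : ℝ) + 1) < b)
    (hb₂ : b < 1) : parabolicCos d b ∈ Ioo (-1) 1 := by
  have hb₀ := pos_of_sub_one_div_add_one_lt hd hb₁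
  have hd' : (1 : ℝ) ≤ d := by exact_mod_cast hd
  have hb₁' : (d : ℝ) - 1 < b * (d + 1) := (div_lt_iff₀ (by linarith)).1 hb₁
  rw [parabolicCos, mem_Ioo, lt_div_iff₀ (by positivity), div_lt_iff₀ (by positivity)]
  constructor <;> nlinarith

theorem parabolicTime_mem_Ioo (hd : 0 < d) (hb₁ : ((d : ℝ) - 1) / ((d : ℝ) + 1) < b)
    (hb₂ : b < 1) : parabolicTime d b ∈ Ioo 0 π :=
  have hc := parabolicCos_mem_Ioo hd hb₁ hb₂
  ⟨arccos_pos.2 hc.2, arccos_lt_pi.2 hc.1⟩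

theorem cos_parabolicTime (hd : 0 < d) (hb₁ : ((d : ℝ) - 1) / ((d : ℝ) + 1) < b)
    (hb₂ : b < 1) : cos (parabolicTime d b) = parabolicCos d b :=
  have hc := parabolicCos_mem_Ioo hd hb₁ hb₂
  cos_arccos hc.1.le hc.2.le

theorem parabolicAngle_lt_pi (hd : 0 < d) (hb₁ : ((d : ℝ) - 1) / ((d : ℝ) + 1) < b)
    (hb₂ : b < 1) : parabolicAngle d b < π := by
  have ht := parabolicTime_mem_Ioo hd hb₁ hb₂
  have harg := arg_one_add_mul_exp_mul_I_lt_half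
    (abs_lt_one_of_sub_one_div_add_one_lt hd hb₁ hb₂) ht.1 ht.2
  have hd' : (0 : ℝ) ≤ d := d.cast_nonneg
  rw [parabolicAngle]
  nlinarith [ht.2]

/-- `isingLift - id` decreases on `[0, parabolicTime]`, from `0` down to `-parabolicAngle`. -/
theorem parabolicAngle_pos (hd : 0 < d) (hb₁ : ((d : ℝ) - 1) / ((d : ℝ) + 1) < b)
    (hb₂ : b < 1) : 0 < parabolicAngle d b := by
  have hb₀ := pos_of_sub_one_div_add_one_lt hd hb₁
  have hb := abs_lt_one_of_sub_one_div_add_one_lt hd hb₁ hb₂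
  have ht := parabolicTime_mem_Ioo hd hb₁ hb₂
  have hanti : StrictAntiOn (fun t => isingLift d 0 b t - t) (Icc 0 (parabolicTime d b)) := by
    refine strictAntiOn_of_deriv_neg (convex_Icc _ _)
      ((continuous_isingLift hb d 0).sub continuous_id).continuousOn fun x hx => ?_
    rw [interior_Icc] at hx
    have hcos : cos (parabolicTime d b) < cos x :=
      strictAntiOn_cos ⟨hx.1.le, (hx.2.trans ht.2).le⟩ ⟨ht.1.le, ht.2.le⟩ hx.2
    rw [((hasDerivAt_isingLift hb d 0 x).fun_sub (hasDerivAt_id' x)).deriv,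
      isingLiftDeriv_sub_one hb₀.ne' hb, ← cos_parabolicTime hd hb₁ hb₂]
    exact div_neg_of_neg_of_pos (mul_neg_of_pos_of_neg (by positivity) (by linarith))
      (one_add_two_mul_cos_add_sq_pos hb x)
  have h := hanti (left_mem_Icc.2 ht.1.le) (right_mem_Icc.2 ht.1.le) ht.1
  simp only [isingLift_zero hb, isingLift_parabolicTime] at h
  linarith

theorem eq_parabolicAngle_of_parabolic (hd : 0 < d)
    (hb₁ : ((d : ℝ) - 1) / ((d : ℝ) + 1) < b) (hb₂ : b < 1) {θ : ℝ}
    (hθ : θ ∈ Ioo 0 π)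
    (hpar : ∃ R : ℂ, ‖R‖ = 1 ∧ fIsing d (Complex.exp (θ * I)) b R = R ∧
      deriv (fIsing d (Complex.exp (θ * I)) b) R = 1) :
    θ = parabolicAngle d b := by
  have hb₀ := pos_of_sub_one_div_add_one_lt hd hb₁
  have hb := abs_lt_one_of_sub_one_div_add_one_lt hd hb₁ hb₂
  obtain ⟨R, hR, hfix, hder⟩ := hpar
  obtain ⟨t, rfl⟩ : ∃ t : ℝ, Complex.exp (t * I) = R := by
    rw [← mem_range, Complex.range_exp_mul_I, mem_sphere_zero_iff_norm, hR]
  have hslope : isingLiftDeriv d b t = 1 := by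
    have h := deriv_fIsing_exp_mul_I hb d θ t
    rw [hder, hfix, one_mul] at h
    exact_mod_cast (mul_eq_right₀ (Complex.exp_ne_zero _)).1 h.symm
  have hcos : cos t = cos (parabolicTime d b) := by
    have h := isingLiftDeriv_sub_one (d := d) hb₀.ne' hb t
    rw [hslope, sub_self, eq_comm, div_eq_zero_iff] at h
    rw [cos_parabolicTime hd hb₁ hb₂]
    rcases h with h | h
    · linarith [(mul_eq_zero.1 h).resolve_left (by positivity)]
    · exact absurd h (one_add_two_mul_cos_add_sq_pos hb t).ne'
  have hpos := parabolicAngle_pos hd hb₁ hb₂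
  have hltπ := parabolicAngle_lt_pi hd hb₁ hb₂
  -- `e^{it}` is `e^{± i t*}`; a fixed point there forces `θ ∓ parabolicAngle d b ∈ 2πℤ`.
  have hshift : ∀ σ : ℝ, Complex.exp (t * I) = Complex.exp (σ * I) →
      Complex.exp ((isingLift d θ b σ - σ : ℝ) * I) = 1 := fun σ hσ => by
    rw [hσ, fIsing_exp_mul_I hb] at hfix
    rw [Complex.ofReal_sub, sub_mul, Complex.exp_sub, hfix, div_self (Complex.exp_ne_zero _)]
  rcases exp_mul_I_eq_or_of_cos_eq hcos with h | h
  · have h0 := hshift _ h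
    rw [isingLift_parabolicTime] at h0
    linarith [eq_zero_of_exp_mul_I_eq_one h0 (by linarith [hθ.1]) (by linarith [hθ.2])]
  · have h0 := hshift _ h
    rw [isingLift_neg_parabolicTime hb] at h0
    have h1 := eq_zero_of_exp_mul_I_eq_one h0 (by linarith [hθ.1]) (by linarith [hθ.2])
    linarith [hθ.1]

theorem exists_fixed_isingLift_of_nonneg (hd : 0 < d)
    (hb₁ : ((d : ℝ) - 1) / ((d : ℝ) + 1) < b) (hb₂ : b < 1) {θ : ℝ} (hθ₀ : 0 ≤ θ)
    (hθ : θ ≤ parabolicAngle d b) :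
    ∃ s, θ ≤ s ∧ s < π ∧ isingLift d θ b s = s := by
  have hb := abs_lt_one_of_sub_one_div_add_one_lt hd hb₁ hb₂
  have ht := parabolicTime_mem_Ioo hd hb₁ hb₂
  obtain ⟨s, hs, hfix⟩ := intermediate_value_Icc' ht.1.le
    ((continuous_isingLift hb d θ).sub continuous_id).continuousOn
    (show (0 : ℝ) ∈ Icc (isingLift d θ b (parabolicTime d b) - parabolicTime d b)
        (isingLift d θ b 0 - 0) by
      rw [isingLift_parabolicTime, isingLift_zero hb]
      constructor <;> linarith)
  have hfix : isingLift d θ b s = s := sub_eq_zero.1 hfix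
  refine ⟨s, ?_, hs.2.trans_lt ht.2, hfix⟩
  calc θ = isingLift d θ b 0 := (isingLift_zero hb d θ).symm
    _ ≤ isingLift d θ b s := (isingLift_strictMono hb hd θ).monotone hs.1
    _ = s := hfix

theorem exists_fixed_isingLift (hd : 0 < d)
    (hb₁ : ((d : ℝ) - 1) / ((d : ℝ) + 1) < b) (hb₂ : b < 1) {θ : ℝ}
    (hθ : |θ| < parabolicAngle d b) :
    ∃ s, -π < s ∧ s < π ∧ isingLift d θ b s = s ∧ θ ∈ uIcc 0 s := by
  rcases le_total 0 θ with hθ₀ | hθ₀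
  · obtain ⟨s, hθs, hsπ, hfix⟩ :=
      exists_fixed_isingLift_of_nonneg hd hb₁ hb₂ hθ₀ (le_of_abs_le hθ.le)
    exact ⟨s, by linarith [pi_pos], hsπ, hfix, mem_uIcc.2 (Or.inl ⟨hθ₀, hθs⟩)⟩
  · obtain ⟨s, hθs, hsπ, hfix⟩ :=
      exists_fixed_isingLift_of_nonneg hd hb₁ hb₂ (neg_nonneg.2 hθ₀)
        (by linarith [(abs_lt.1 hθ).1])
    refine ⟨-s, by linarith, by linarith [pi_pos], ?_,
      mem_uIcc.2 (Or.inr ⟨by linarith, hθ₀⟩)⟩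
    rw [← neg_neg θ, isingLift_neg (abs_lt_one_of_sub_one_div_add_one_lt hd hb₁ hb₂), hfix]

end parabolic

/-- Theorem 3.1(i): for `b ∈ ((d-1)/(d+1), 1)`, `θ_b` the parabolic parameter of Lemma
3.8(i), and `ξ = e^{iθ}` with `θ ∈ (-θ_b, θ_b)`, there is a closed circular arc with
boundary point 1, not containing -1, that is forward invariant under `f_{ξ,b}`;
in particular the orbit of `ξ` avoids `-1`. -/
theorem fIsing_ferro_invariant_arc (d : ℕ) (hd : 2 ≤ d) (b : ℝ)
    (hb₁ : ((d : ℝ) - 1) / ((d : ℝ) + 1) < b) (hb₂ : b < 1)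
    (θb : ℝ) (hθb : θb ∈ Set.Ioo 0 Real.pi)
    (hpar : ∃ R : ℂ, ‖R‖ = 1 ∧
      fIsing d (Complex.exp (θb * Complex.I)) (b : ℂ) R = R ∧
      deriv (fIsing d (Complex.exp (θb * Complex.I)) (b : ℂ)) R = 1) :
    ∀ θ : ℝ, -θb < θ → θ < θb →
      (∃ s : ℝ, -Real.pi < s ∧ s < Real.pi ∧ (-1 : ℂ) ∉ circArc s ∧
        Set.MapsTo (fIsing d (Complex.exp (θ * Complex.I)) (b : ℂ))
          (circArc s) (circArc s)) ∧
      ∀ n : ℕ, (fIsing d (Complex.exp (θ * Complex.I)) (b : ℂ))^[n]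
        (Complex.exp (θ * Complex.I)) ≠ -1 := by
  intro θ hθ₁ hθ₂
  have hd₀ : 0 < d := by omega
  have hb := abs_lt_one_of_sub_one_div_add_one_lt hd₀ hb₁ hb₂
  have hθb' := eq_parabolicAngle_of_parabolic hd₀ hb₁ hb₂ hθb hpar
  obtain ⟨s, hs₁, hs₂, hfix, hθs⟩ :=
    exists_fixed_isingLift hd₀ hb₁ hb₂ (abs_lt.2 ⟨hθb' ▸ hθ₁, hθb' ▸ hθ₂⟩)
  have hmaps : MapsTo (fIsing d (Complex.exp (θ * I)) b) (circArc s) (circArc s) :=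
    mapsTo_circArc (fIsing_exp_mul_I hb d θ) (isingLift_strictMono hb hd₀ θ).monotone
      (by rwa [isingLift_zero hb]) (by rw [hfix]; exact right_mem_uIcc)
  refine ⟨⟨s, hs₁, hs₂, neg_one_notMem_circArc hs₁ hs₂, hmaps⟩, fun n h => ?_⟩
  exact neg_one_notMem_circArc hs₁ hs₂ (h ▸ hmaps.iterate n ⟨θ, hθs, rfl⟩)
end
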